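/- arXiv:2604.12769 — 4 statements merged into one kernel-verified Lean document; each statement's English description precedes it below -/
import Mathlib

section
/- There exists a constant C > 0 such that for all a, b ∈ ℝ, ∫_{T̂} (a² + b²)(φ(x)² + ‖∇φ(x)‖²) dx ≤ C ∫_{T̂} (a ∂₁φ(x) + b ∂₂φ(x))² dx; that is, the squared H¹(T̂)-norm of the bubble field (aφ, bφ) is controlled by the squared L²(T̂)-norm of its divergence. -/
open MeasureTheory
open scoped MeasureTheory

noncomputable section

abbrev E2 : Type := EuclideanSpace ℝ (Fin 2)

/-- The point `(a, b)` in `ℝ²`. -/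
def pt (a b : ℝ) : E2 := WithLp.toLp 2 ![a, b]

/-- The closed reference triangle with vertices `(0,0)`, `(1,0)`, `(0,1)`. -/
def refT : Set E2 := {x : E2 | 0 ≤ x 0 ∧ 0 ≤ x 1 ∧ x 0 + x 1 ≤ 1}

/-- The Fortin–Soulie bubble function. -/
def phi (x : E2) : ℝ := 2 - 3 * ((1 - x 0 - x 1) ^ 2 + (x 0) ^ 2 + (x 1) ^ 2)

/-- `i`-th partial derivative of a scalar function. -/
def dphi (i : Fin 2) (x : E2) : ℝ := fderiv ℝ phi x (EuclideanSpace.single i 1)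

/-- `f` is (the evaluation map of) a polynomial of total degree at most `n`. -/
def IsPolyDeg (n : ℕ) (f : E2 → ℝ) : Prop :=
  ∃ p : MvPolynomial (Fin 2) ℝ, p.totalDegree ≤ n ∧
    ∀ x : E2, f x = MvPolynomial.eval (fun i => x i) p

/-- Each component of `w` is a polynomial of total degree at most `n`. -/
def IsPolyVec (n : ℕ) (w : E2 → E2) : Prop :=
  ∀ i : Fin 2, IsPolyDeg n (fun x => w x i)

/-- The bubble vector field `(a φ, b φ)`. -/
def bub (a b : ℝ) (x : E2) : E2 := pt (a * phi x) (b * phi x)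

/-- Jacobian determinant. -/
def jdet (F : E2 → E2) (x : E2) : ℝ := LinearMap.det (fderiv ℝ F x : E2 →ₗ[ℝ] E2)

/-- Piola transform matrix `A(x) = DF(x)/det DF(x)` as a continuous linear map. -/
def piola (F : E2 → E2) (x : E2) : E2 →L[ℝ] E2 := (jdet F x)⁻¹ • fderiv ℝ F x

/-- Divergence: trace of the Jacobian. -/
def divg (f : E2 → E2) (x : E2) : ℝ :=
  LinearMap.trace ℝ E2 (fderiv ℝ f x : E2 →ₗ[ℝ] E2)

/-- `(K,h)`-admissible map. -/
def IsAdmissible (K h : ℝ) (F : E2 → E2) : Prop :=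
  IsPolyVec 2 F ∧ Set.InjOn F refT ∧
  ∀ x ∈ refT, ∃ e : E2 ≃L[ℝ] E2,
    (e : E2 →L[ℝ] E2) = fderiv ℝ F x ∧
    ‖(e : E2 →L[ℝ] E2)‖ ≤ K * h ∧
    ‖(e.symm : E2 →L[ℝ] E2)‖ ≤ K * h⁻¹ ∧
    ‖fderiv ℝ (fderiv ℝ F) x‖ ≤ K * h ^ 2 ∧
    K⁻¹ * h ^ 2 ≤ jdet F x ∧ jdet F x ≤ K * h ^ 2

/-- The six quadratic Lagrange nodes of the reference triangle. -/
def nodes : Set E2 :=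
  {pt 0 0, pt 1 0, pt 0 1, pt (1/2) 0, pt (1/2) (1/2), pt 0 (1/2)}

/-- `(P, Q)` are the endpoints of an edge of the reference triangle. -/
def IsEdgePair (P Q : E2) : Prop :=
  (P = pt 0 0 ∧ Q = pt 1 0) ∨ (P = pt 0 0 ∧ Q = pt 0 1) ∨ (P = pt 1 0 ∧ Q = pt 0 1)

/-- Sobolev seminorm `|v|_{W^{m,p}(S)}`. -/
def sobSemi (m : ℕ) (p : ℝ) (S : Set E2) (v : E2 → E2) : ℝ :=
  (∫ x in S, ‖iteratedFDeriv ℝ m v x‖ ^ p) ^ (1 / p)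

/-! Both sides are integrals of polynomials over `T̂` and can be computed exactly:
`∫ (φ² + ‖∇φ‖²) = 31/5` and `∫ (a ∂₁φ + b ∂₂φ)² = 3 (a² + ab + b²) ≥ 3/2 (a² + b²)`,
so `C = 62/15` works, and is optimal (take `a = -b`). The integrals are evaluated by Fubini on the
triangle, first in `x₂ ∈ [0, 1 - x₁]`, then in `x₁ ∈ [0, 1]`. -/

open Set

theorem norm_gradient_sq_eq_sum {ι : Type*} [Fintype ι] [DecidableEq ι]
    (f : EuclideanSpace ℝ ι → ℝ) (x : EuclideanSpace ℝ ι) :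
    ‖gradient f x‖ ^ 2 = ∑ i, fderiv ℝ f x (EuclideanSpace.single i 1) ^ 2 := by
  have hcoord (i : ι) : gradient f x i = fderiv ℝ f x (EuclideanSpace.single i 1) := by
    rw [← inner_gradient_left, EuclideanSpace.inner_single_right]; simp
  simp [EuclideanSpace.real_norm_sq_eq, hcoord]

theorem integral_eq_of_eq_sum_mul_pow {n : ℕ} {f : ℝ → ℝ} (c : Fin n → ℝ)
    (hf : ∀ y, f y = ∑ k, c k * y ^ (k : ℕ)) (t : ℝ) :
    ∫ y in (0 : ℝ)..t, f y = ∑ k, c k * t ^ ((k : ℕ) + 1) / ((k : ℕ) + 1) := by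
  simp only [hf]
  rw [intervalIntegral.integral_finsetSum fun k _ =>
    (by fun_prop : Continuous _).intervalIntegrable _ _]
  simp [integral_pow, mul_div_assoc]

def triangle : Set (ℝ × ℝ) := {p | 0 ≤ p.1 ∧ 0 ≤ p.2 ∧ p.1 + p.2 ≤ 1}

theorem isClosed_triangle : IsClosed triangle :=
  (isClosed_le continuous_const continuous_fst).inter <|
    (isClosed_le continuous_const continuous_snd).inter <|
      isClosed_le (continuous_fst.add continuous_snd) continuous_const

theorem isCompact_triangle : IsCompact triangle :=
  (isCompact_Icc (a := ((0 : ℝ), (0 : ℝ))) (b := (1, 1))).of_isClosed_subset isClosed_triangle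
    fun _ ⟨h1, h2, h3⟩ => ⟨⟨h1, h2⟩, ⟨by linarith, by linarith⟩⟩

theorem integral_triangle {F : ℝ × ℝ → ℝ} (hF : Continuous F) :
    ∫ p in triangle, F p = ∫ u in (0 : ℝ)..1, ∫ v in (0 : ℝ)..(1 - u), F (u, v) := by
  have hT : MeasurableSet triangle := isClosed_triangle.measurableSet
  have hfiber (u : ℝ) : ∫ v, triangle.indicator F (u, v) =
      (Icc 0 1).indicator (fun u => ∫ v in (0 : ℝ)..(1 - u), F (u, v)) u := by
    by_cases hu : u ∈ Icc (0 : ℝ) 1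
    · have hslice :
          (fun v => triangle.indicator F (u, v)) = (Icc 0 (1 - u)).indicator (F ⟨u, ·⟩) := by
        ext v
        simp only [indicator_apply, triangle, mem_ofPred_eq, mem_Icc]
        split_ifs <;> grind
      rw [indicator_of_mem hu, hslice, integral_indicator measurableSet_Icc,
        intervalIntegral.integral_of_le (by linarith [hu.2]), integral_Icc_eq_integral_Ioc]
    · have hslice (v : ℝ) : triangle.indicator F (u, v) = 0 :=
        indicator_of_notMem (fun h => hu ⟨h.1, by linarith [h.2.1, h.2.2]⟩) _
      simp [indicator_of_notMem hu, hslice]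
  have hint : Integrable (triangle.indicator F) :=
    (integrable_indicator_iff hT).2 (hF.continuousOn.integrableOn_compact isCompact_triangle)
  rw [Measure.volume_eq_prod] at hint
  rw [← integral_indicator hT, Measure.volume_eq_prod, integral_prod _ hint]
  simp only [hfiber]
  rw [integral_indicator measurableSet_Icc, intervalIntegral.integral_of_le zero_le_one,
    integral_Icc_eq_integral_Ioc]

theorem pt_apply_zero (a b : ℝ) : pt a b 0 = a := rfl

theorem pt_apply_one (a b : ℝ) : pt a b 1 = b := rfl

theorem integral_refT {f : E2 → ℝ} (hf : Continuous f) :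
    ∫ x in refT, f x = ∫ u in (0 : ℝ)..1, ∫ v in (0 : ℝ)..(1 - u), f (pt u v) := by
  let e : (ℝ × ℝ) ≃ᵐ E2 :=
    (MeasurableEquiv.piFinTwo fun _ => ℝ).symm.trans (MeasurableEquiv.toLp 2 _)
  have he : MeasurePreserving e :=
    ((EuclideanSpace.volume_preserving_symm_measurableEquiv_toLp (Fin 2)).symm _).comp
      ((volume_preserving_piFinTwo fun _ => ℝ).symm _)
  have he_apply (p : ℝ × ℝ) : e p = pt p.1 p.2 := by ext i; fin_cases i <;> rfl
  have hpre : e ⁻¹' refT = triangle := by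
    ext p
    simp [he_apply, refT, triangle, pt_apply_zero, pt_apply_one]
  rw [← he.setIntegral_preimage_emb e.measurableEmbedding, hpre]
  simp only [he_apply]
  exact integral_triangle (hf.comp (by unfold pt; fun_prop))

theorem hasFDerivAt_phi (x : E2) :
    HasFDerivAt phi ((6 - 12 * x 0 - 6 * x 1) • EuclideanSpace.proj (0 : Fin 2) +
      (6 - 6 * x 0 - 12 * x 1) • EuclideanSpace.proj (1 : Fin 2) : E2 →L[ℝ] ℝ) x := by
  have h0 := (EuclideanSpace.proj (0 : Fin 2) : E2 →L[ℝ] ℝ).hasFDerivAt (x := x)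
  have h1 := (EuclideanSpace.proj (1 : Fin 2) : E2 →L[ℝ] ℝ).hasFDerivAt (x := x)
  refine HasFDerivAt.congr_fderiv ((hasFDerivAt_const (2 : ℝ) x).sub
    (((((((hasFDerivAt_const (1 : ℝ) x).sub h0).sub h1).pow 2).add (h0.pow 2)).add
      (h1.pow 2)).const_mul 3)) ?_
  ext v
  simp only [add_apply, sub_apply, smul_apply, zero_apply, PiLp.proj_apply, Pi.sub_apply,
    smul_eq_mul, nsmul_eq_mul]
  ring

theorem dphi_zero (x : E2) : dphi 0 x = 6 - 12 * x 0 - 6 * x 1 := by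
  simp [dphi, (hasFDerivAt_phi x).fderiv]

theorem dphi_one (x : E2) : dphi 1 x = 6 - 6 * x 0 - 12 * x 1 := by
  simp [dphi, (hasFDerivAt_phi x).fderiv]

theorem norm_gradient_phi_sq (x : E2) : ‖gradient phi x‖ ^ 2 = dphi 0 x ^ 2 + dphi 1 x ^ 2 := by
  rw [norm_gradient_sq_eq_sum, Fin.sum_univ_two]
  rfl

theorem integral_refT_sq_dphi (a b : ℝ) :
    ∫ x in refT, (a * dphi 0 x + b * dphi 1 x) ^ 2 = 3 * (a ^ 2 + a * b + b ^ 2) := by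
  simp only [dphi_zero, dphi_one]
  rw [integral_refT (by fun_prop)]
  simp only [pt_apply_zero, pt_apply_one]
  have inner (u : ℝ) :
      ∫ v in (0 : ℝ)..(1 - u), (a * (6 - 12 * u - 6 * v) + b * (6 - 6 * u - 12 * v)) ^ 2 =
        ∑ k, ![12 * (a ^ 2 + a * b + b ^ 2), -72 * a ^ 2 - 36 * a * b - 36 * b ^ 2,
          144 * a ^ 2 + 36 * a * b + 36 * b ^ 2, -84 * a ^ 2 - 12 * a * b - 12 * b ^ 2] k *
            u ^ (k : ℕ) := by
    set A := a * (6 - 12 * u) + b * (6 - 6 * u)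
    set B := 6 * a + 12 * b
    rw [integral_eq_of_eq_sum_mul_pow ![A ^ 2, -2 * A * B, B ^ 2] fun v => by
      simp only [Fin.sum_univ_succ, Fin.sum_univ_zero, Matrix.cons_val_zero, Matrix.cons_val_succ,
        Fin.val_zero, Fin.val_succ, A, B]
      push_cast
      ring]
    simp only [Fin.sum_univ_succ, Fin.sum_univ_zero, Matrix.cons_val_zero, Matrix.cons_val_succ,
      Fin.val_zero, Fin.val_succ, A, B]
    push_cast
    ring
  rw [integral_eq_of_eq_sum_mul_pow _ inner]
  simp only [Fin.sum_univ_succ, Fin.sum_univ_zero, Matrix.cons_val_zero, Matrix.cons_val_succ,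
    Fin.val_zero, Fin.val_succ]
  push_cast
  ring

theorem integral_refT_phi_sq_add_norm_gradient_sq :
    ∫ x in refT, (phi x ^ 2 + ‖gradient phi x‖ ^ 2) = 31 / 5 := by
  simp only [phi, norm_gradient_phi_sq, dphi_zero, dphi_one]
  rw [integral_refT (by fun_prop)]
  simp only [pt_apply_zero, pt_apply_one]
  have inner (u : ℝ) :
      ∫ v in (0 : ℝ)..(1 - u), ((2 - 3 * ((1 - u - v) ^ 2 + u ^ 2 + v ^ 2)) ^ 2 +
        ((6 - 12 * u - 6 * v) ^ 2 + (6 - 6 * u - 12 * v) ^ 2)) =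
        ∑ k, ![121 / 5, -109, 198, -154, 66, -126 / 5] k * u ^ (k : ℕ) := by
    rw [integral_eq_of_eq_sum_mul_pow ![73 - 228 * u + 228 * u ^ 2 - 72 * u ^ 3 + 36 * u ^ 4,
      -228 + 372 * u - 144 * u ^ 2 + 72 * u ^ 3, 228 - 144 * u + 108 * u ^ 2, -72 + 72 * u, 36]
      fun v => by
        simp only [Fin.sum_univ_succ, Fin.sum_univ_zero, Matrix.cons_val_zero,
          Matrix.cons_val_succ, Fin.val_zero, Fin.val_succ]
        push_cast
        ring]
    simp only [Fin.sum_univ_succ, Fin.sum_univ_zero, Matrix.cons_val_zero, Matrix.cons_val_succ,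
      Fin.val_zero, Fin.val_succ]
    push_cast
    ring
  rw [integral_eq_of_eq_sum_mul_pow _ inner]
  simp only [Fin.sum_univ_succ, Fin.sum_univ_zero, Matrix.cons_val_zero, Matrix.cons_val_succ,
    Fin.val_zero, Fin.val_succ]
  norm_num

/-- the squared `H¹(T̂)`-norm of the bubble field `(aφ, bφ)` is
controlled by the squared `L²(T̂)`-norm of its divergence. -/
theorem stmt1 :
    ∃ C > (0 : ℝ), ∀ a b : ℝ,
      (∫ x in refT, (a ^ 2 + b ^ 2) * (phi x ^ 2 + ‖gradient phi x‖ ^ 2)) ≤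
        C * ∫ x in refT, (a * dphi 0 x + b * dphi 1 x) ^ 2 := by
  refine ⟨62 / 15, by norm_num, fun a b => ?_⟩
  rw [integral_const_mul, integral_refT_phi_sq_add_norm_gradient_sq, integral_refT_sq_dphi]
  nlinarith [sq_nonneg (a + b)]
end
end

section
/- Let F : ℝ² → ℝ² be continuously differentiable and injective on T̂ with DF(x̂) invertible for every x̂ ∈ T̂; set T = F(T̂) and A(x̂) = DF(x̂)/det DF(x̂). Let ŵ : ℝ² → ℝ² have components that are polynomials of total degree at most 2, and define w on T by w(F(x̂)) = A(x̂) ŵ(x̂). If w(F(â)) = 0 for every node â ∈ N, then ŵ = 0 identically and hence w = 0 on T; consequently, a function of the curved Fortin–Soulie local space W(T) = {x ↦ A(F⁻¹x) ŵ(F⁻¹x) : ŵ with components polynomials of total degree at most 2} is uniquely determined by its values at the six mapped nodes F(â), â ∈ N. -/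
open MeasureTheory
open scoped MeasureTheory

noncomputable section

/-!
The Piola matrix `DF(â)/det DF(â)` is invertible at every node, so `ŵ` itself vanishes at the
six quadratic Lagrange nodes. These nodes are unisolvent for polynomials of total degree at
most `2`: each such polynomial equals its Lagrange interpolant on the nodes, which is then `0`.
-/

/-- The quadratic Lagrange interpolant of `f` at the six nodes of the reference triangle. -/
def quadInterp (f : ℝ → ℝ → ℝ) (x y : ℝ) : ℝ :=
  f 0 0 * ((1 - x - y) * (2 * (1 - x - y) - 1)) + f 1 0 * (x * (2 * x - 1))
    + f 0 1 * (y * (2 * y - 1)) + f 2⁻¹ 0 * (4 * x * (1 - x - y))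
    + f 2⁻¹ 2⁻¹ * (4 * x * y) + f 0 2⁻¹ * (4 * y * (1 - x - y))

lemma quadInterp_pow_mul_pow {a b : ℕ} (h : a + b ≤ 2) (x y : ℝ) :
    quadInterp (fun s t => s ^ a * t ^ b) x y = x ^ a * y ^ b := by
  have ha : a ≤ 2 := by omega
  unfold quadInterp
  interval_cases a <;> (have hb : b ≤ 2 := by omega) <;>
    interval_cases b <;> first | omega | ring

open MvPolynomial in
lemma quadInterp_eval {p : MvPolynomial (Fin 2) ℝ} (hp : p.totalDegree ≤ 2) (x y : ℝ) :
    quadInterp (fun s t => eval ![s, t] p) x y = eval ![x, y] p := by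
  have eval_eq_sum : ∀ s t : ℝ,
      eval ![s, t] p = ∑ d ∈ p.support, coeff d p * (s ^ d 0 * t ^ d 1) := fun s t => by
    rw [eval_eq']
    exact Finset.sum_congr rfl fun d _ => by simp [Fin.prod_univ_two]
  simp only [quadInterp, eval_eq_sum, Finset.sum_mul, ← Finset.sum_add_distrib]
  refine Finset.sum_congr rfl fun d hd => ?_
  have hdeg : d 0 + d 1 ≤ 2 := by
    have h := le_totalDegree hd
    rw [Finsupp.sum_fintype _ _ (fun _ => rfl), Fin.sum_univ_two] at h
    exact h.trans hp
  rw [← quadInterp_pow_mul_pow hdeg x y, quadInterp]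
  ring

lemma pt_apply_eq_vecCons (a b : ℝ) : (fun i => pt a b i) = ![a, b] := rfl

lemma IsPolyDeg.eq_zero_of_forall_nodes {f : E2 → ℝ} (hf : IsPolyDeg 2 f)
    (h : ∀ a ∈ nodes, f a = 0) (x : E2) : f x = 0 := by
  obtain ⟨p, hp, hev⟩ := hf
  have hnode : ∀ a b : ℝ, pt a b ∈ nodes → MvPolynomial.eval ![a, b] p = 0 :=
    fun a b hab => by rw [← pt_apply_eq_vecCons, ← hev, h _ hab]
  have hx : (fun i => x i) = ![x 0, x 1] := by
    funext i; fin_cases i <;> rfl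
  rw [hev, hx, ← quadInterp_eval hp, quadInterp,
    hnode 0 0 (by simp [nodes]), hnode 1 0 (by simp [nodes]), hnode 0 1 (by simp [nodes]),
    hnode 2⁻¹ 0 (by norm_num [nodes]), hnode 2⁻¹ 2⁻¹ (by norm_num [nodes]),
    hnode 0 2⁻¹ (by norm_num [nodes])]
  ring

lemma IsPolyVec.eq_zero_of_forall_nodes {w : E2 → E2} (hw : IsPolyVec 2 w)
    (h : ∀ a ∈ nodes, w a = 0) (x : E2) : w x = 0 := by
  ext i
  exact (hw i).eq_zero_of_forall_nodes (fun a ha => by simp [h a ha]) x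

lemma nodes_subset_refT : nodes ⊆ refT := by
  intro a ha
  simp only [nodes, Set.mem_insert_iff, Set.mem_singleton_iff] at ha
  rcases ha with rfl | rfl | rfl | rfl | rfl | rfl <;> norm_num [refT, pt]

lemma jdet_ne_zero {F : E2 → E2} {x : E2} (e : E2 ≃L[ℝ] E2)
    (he : (e : E2 →L[ℝ] E2) = fderiv ℝ F x) : jdet F x ≠ 0 := by
  rw [jdet, ← he]
  exact (LinearEquiv.isUnit_det' e.toLinearEquiv).ne_zero

lemma eq_zero_of_piola_apply_eq_zero {F : E2 → E2} {x v : E2} (e : E2 ≃L[ℝ] E2)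
    (he : (e : E2 →L[ℝ] E2) = fderiv ℝ F x) (h : piola F x v = 0) : v = 0 := by
  rw [piola, smul_apply, smul_eq_zero, inv_eq_zero, ← he] at h
  exact e.map_eq_zero_iff.mp (h.resolve_left (jdet_ne_zero e he))

/-- a function of the curved Fortin–Soulie local space `W(T)` is
uniquely determined by its values at the six mapped Lagrange nodes. -/
theorem stmt4 :
    ∀ F : E2 → E2, ContDiff ℝ 1 F → Set.InjOn F refT →
      (∀ x ∈ refT, ∃ e : E2 ≃L[ℝ] E2, (e : E2 →L[ℝ] E2) = fderiv ℝ F x) →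
      ∀ what : E2 → E2, IsPolyVec 2 what →
      ∀ w : E2 → E2, (∀ x ∈ refT, w (F x) = piola F x (what x)) →
      (∀ a ∈ nodes, w (F a) = 0) →
      (∀ x : E2, what x = 0) ∧ (∀ x ∈ refT, w (F x) = 0) := by
  intro F _ _ hder what hwhat w hw hnodes
  have hwhat_nodes : ∀ a ∈ nodes, what a = 0 := fun a ha => by
    obtain ⟨e, he⟩ := hder a (nodes_subset_refT ha)
    exact eq_zero_of_piola_apply_eq_zero e he
      ((hw a (nodes_subset_refT ha)).symm.trans (hnodes a ha))
  have hwhat_zero : ∀ x, what x = 0 := hwhat.eq_zero_of_forall_nodes hwhat_nodes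
  exact ⟨hwhat_zero, fun x hx => by rw [hw x hx, hwhat_zero x, map_zero]⟩
end
end

section
/- The restriction of the bubble φ to each edge of T̂ is L²-orthogonal to affine functions and vanishes exactly at the two Gauss–Legendre points of that edge: for every edge ê of T̂, (i) ∫_ê φ q dH¹ = 0 for every polynomial q : ℝ² → ℝ of total degree at most 1, and (ii) for x ∈ ê one has φ(x) = 0 if and only if x is one of the two Gauss–Legendre points of ê. -/
open MeasureTheory
open scoped MeasureTheory

noncomputable section

open Set AffineMap

section SegmentIntegral

variable {E F : Type*} [NormedAddCommGroup E] [NormedSpace ℝ E] [MeasurableSpace E] [BorelSpace E]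
  [NormedAddCommGroup F] [NormedSpace ℝ F]

theorem restrict_hausdorffMeasure_segment (x y : E) :
    (μH[1] : Measure E).restrict (segment ℝ x y) =
      nndist x y • (volume.restrict (Icc (0 : ℝ) 1)).map (lineMap x y) := by
  have hmeas : Measurable (lineMap x y : ℝ → E) := lineMap_continuous.measurable
  ext A hA
  rw [Measure.restrict_apply hA, Measure.smul_apply, Measure.map_apply hmeas hA,
    Measure.restrict_apply (hmeas hA), segment_eq_image_lineMap, inter_comm,
    ← image_inter_preimage, hausdorffMeasure_lineMap_image, hausdorffMeasure_real, inter_comm]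

theorem integral_segment_hausdorffMeasure [SecondCountableTopologyEither E F] {f : E → F}
    (hf : Continuous f) (x y : E) :
    ∫ z in segment ℝ x y, f z ∂μH[1] =
      dist x y • ∫ t in (0 : ℝ)..1, f (lineMap x y t) := by
  rw [restrict_hausdorffMeasure_segment, integral_smul_nnreal_measure,
    integral_map lineMap_continuous.measurable.aemeasurable hf.aestronglyMeasurable,
    integral_Icc_eq_integral_Ioc, ← intervalIntegral.integral_of_le zero_le_one, NNReal.smul_def,
    coe_nndist]

end SegmentIntegral

theorem MvPolynomial.eval_eq_of_totalDegree_le_one {R σ : Type*} [CommSemiring R] [Fintype σ]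
    [DecidableEq σ] {p : MvPolynomial σ R} (hp : p.totalDegree ≤ 1) (v : σ → R) :
    eval v p = coeff 0 p + ∑ i, coeff (Finsupp.single i 1) p * v i := by
  have hsupp : p.support ⊆ insert 0 (Finset.univ.image fun i => Finsupp.single i 1) := by
    intro d hd
    rcases Nat.le_one_iff_eq_zero_or_eq_one.mp ((le_totalDegree hd).trans hp) with h | h
    · simp [(Finsupp.degree_eq_zero_iff d).mp h]
    · obtain ⟨i, rfl⟩ := (Finsupp.sum_eq_one_iff d).mp h
      simp
  rw [eval_eq', Finset.sum_subset hsupp fun d _ hd => by rw [notMem_support_iff.mp hd, zero_mul],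
    Finset.sum_insert (by simp),
    Finset.sum_image fun i _ j _ h => Finsupp.single_left_injective one_ne_zero h]
  simp [Finsupp.single_apply, pow_ite]

theorem IsPolyDeg.continuous {n : ℕ} {q : E2 → ℝ} (hq : IsPolyDeg n q) : Continuous q := by
  obtain ⟨p, -, hpq⟩ := hq
  rw [funext hpq]
  exact p.continuous_eval.comp (by fun_prop)

theorem IsPolyDeg.exists_comp_lineMap_eq {q : E2 → ℝ} (hq : IsPolyDeg 1 q) (P Q : E2) :
    ∃ α β : ℝ, ∀ t : ℝ, q (lineMap P Q t) = α + β * t := by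
  obtain ⟨p, hp, hpq⟩ := hq
  refine ⟨p.coeff 0 + ∑ i, p.coeff (Finsupp.single i 1) * P i,
    ∑ i, p.coeff (Finsupp.single i 1) * (Q i - P i), fun t => ?_⟩
  simp only [hpq, MvPolynomial.eval_eq_of_totalDegree_le_one hp, lineMap_apply_module',
    PiLp.add_apply, PiLp.smul_apply, PiLp.sub_apply, smul_eq_mul, Finset.sum_mul, add_assoc,
    ← Finset.sum_add_distrib]
  congr 1
  exact Finset.sum_congr rfl fun i _ => by ring

theorem continuous_phi : Continuous phi := by
  unfold phi
  fun_prop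

theorem integral_shiftedLegendre_two_mul_affine (α β : ℝ) :
    ∫ t in (0 : ℝ)..1, (6 * t ^ 2 - 6 * t + 1) * (α + β * t) = 0 := by
  have hexpand : ∀ t : ℝ, (6 * t ^ 2 - 6 * t + 1) * (α + β * t) =
      6 * β * t ^ 3 + (6 * α - 6 * β) * t ^ 2 + (β - 6 * α) * t ^ 1 + α := fun t => by ring
  simp only [hexpand]
  repeat rw [intervalIntegral.integral_add (Continuous.intervalIntegrable (by fun_prop) _ _)
    (Continuous.intervalIntegrable (by fun_prop) _ _)]
  simp only [intervalIntegral.integral_const_mul, integral_pow, intervalIntegral.integral_const]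
  norm_num
  ring

theorem shiftedLegendre_two_eq_zero_iff (t : ℝ) :
    6 * t ^ 2 - 6 * t + 1 = 0 ↔ t = (3 - √3) / 6 ∨ t = (3 + √3) / 6 := by
  have h3 : √3 ^ 2 = 3 := Real.sq_sqrt (by norm_num)
  constructor
  · intro h
    have hfactor : (t - (3 - √3) / 6) * (t - (3 + √3) / 6) = 0 := by
      linear_combination h / 6 - h3 / 36
    rcases mul_eq_zero.mp hfactor with hroot | hroot
    · exact Or.inl (sub_eq_zero.mp hroot)
    · exact Or.inr (sub_eq_zero.mp hroot)
  · rintro (rfl | rfl) <;> linear_combination h3 / 6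

theorem IsEdgePair.phi_lineMap {P Q : E2} (h : IsEdgePair P Q) (t : ℝ) :
    phi (lineMap P Q t) = -(6 * t ^ 2 - 6 * t + 1) := by
  rcases h with ⟨rfl, rfl⟩ | ⟨rfl, rfl⟩ | ⟨rfl, rfl⟩ <;>
    simp [phi, pt, lineMap_apply_module'] <;> ring

theorem IsEdgePair.ne {P Q : E2} (h : IsEdgePair P Q) : P ≠ Q := by
  rcases h with ⟨rfl, rfl⟩ | ⟨rfl, rfl⟩ | ⟨rfl, rfl⟩ <;>
    simp [pt]

/-- on each edge of the reference triangle, the bubble `φ` is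
`L²`-orthogonal to affine functions and vanishes exactly at the two
Gauss–Legendre points of the edge. -/
theorem stmt8 :
    ∀ P Q : E2, IsEdgePair P Q →
      (∀ q : E2 → ℝ, IsPolyDeg 1 q →
          (∫ x in segment ℝ P Q, phi x * q x ∂(μH[1])) = 0) ∧
      (∀ x ∈ segment ℝ P Q, (phi x = 0 ↔
        x = P + ((3 - Real.sqrt 3) / 6) • (Q - P) ∨
        x = P + ((3 + Real.sqrt 3) / 6) • (Q - P))) := by
  intro P Q hPQ
  have hline : ∀ s : ℝ, P + s • (Q - P) = lineMap P Q s := fun s => add_comm _ _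
  refine ⟨fun q hq => ?_, fun x hx => ?_⟩
  · obtain ⟨α, β, hqline⟩ := hq.exists_comp_lineMap_eq P Q
    rw [integral_segment_hausdorffMeasure (f := fun x => phi x * q x)
      (continuous_phi.mul hq.continuous)]
    simp only [hPQ.phi_lineMap, hqline, neg_mul, intervalIntegral.integral_neg,
      integral_shiftedLegendre_two_mul_affine, neg_zero, smul_zero]
  · rw [segment_eq_image_lineMap] at hx
    obtain ⟨t, -, rfl⟩ := hx
    rw [hPQ.phi_lineMap, neg_eq_zero, shiftedLegendre_two_eq_zero_iff, hline, hline,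
      (lineMap_injective ℝ hPQ.ne).eq_iff, (lineMap_injective ℝ hPQ.ne).eq_iff]
end
end

section
/- For every K ≥ 1 there exists a constant C > 0 such that for every h ∈ (0,1], every (K,h)-admissible map F and all a, b ∈ ℝ, the fields on T defined by φ_T(F(x̂)) = A(x̂)·(a φ(x̂), b φ(x̂)) and φ'_T(F(x̂)) = A(b̂)·(a φ(x̂), b φ(x̂)), where b̂ = (1/3, 1/3) is the barycenter of T̂, satisfy (∫_T ‖φ_T − φ'_T‖²)^{1/2} ≤ C h (∫_T ‖φ_T‖²)^{1/2} and (∫_{int T} ‖D(φ_T − φ'_T)(x)‖² dx)^{1/2} ≤ C (∫_T ‖φ_T‖²)^{1/2}, where D denotes the Jacobian matrix. -/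
open MeasureTheory
open scoped MeasureTheory

noncomputable section

/-!
Put `G(x̂) = (A(x̂) - A(b̂)) (a φ(x̂), b φ(x̂))`, so that `φ_T - φ'_T = G ∘ F⁻¹` on `T`.
Admissibility makes `A = DF / det DF` Lipschitz on `T̂` with a constant independent of `h`,
while `A(x̂)` shrinks vectors by at most a factor `K² h`; hence `|G| ≲ h |φ_T ∘ F|` pointwise,
and the change of variables `y = F(x̂)` gives the `L²` estimate. For the derivative, `G` is
Lipschitz on `T̂` with constant `≲ |(a, b)|` and `F` is locally `(2K/h)`-anti-Lipschitz, so
`D(φ_T - φ'_T) = O(|(a, b)| / h)` on the interior of `T`. Since `|T| ≲ h²` and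
`‖φ_T‖²_{L²(T)} ≳ |(a, b)|² ∫_{T̂} φ²` with `∫_{T̂} φ² > 0`, both sides scale alike.
-/

open Metric Set Filter Topology

lemma Real.sqrt_le_mul_sqrt {a b c : ℝ} (hc : 0 ≤ c) (h : a ≤ c ^ 2 * b) : √a ≤ c * √b :=
  calc √a ≤ √(c ^ 2 * b) := Real.sqrt_le_sqrt h
    _ = c * √b := by rw [Real.sqrt_mul (sq_nonneg c), Real.sqrt_sq hc]

lemma ContinuousLinearMap.norm_apply_sub_apply_le {𝕜 E E' : Type*} [NontriviallyNormedField 𝕜]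
    [SeminormedAddCommGroup E] [SeminormedAddCommGroup E'] [NormedSpace 𝕜 E] [NormedSpace 𝕜 E']
    (P Q : E →L[𝕜] E') (u v : E) : ‖P u - Q v‖ ≤ ‖P - Q‖ * ‖u‖ + ‖Q‖ * ‖u - v‖ :=
  calc ‖P u - Q v‖ = ‖(P - Q) u + Q (u - v)‖ := by
        rw [sub_apply, map_sub]; abel_nf
    _ ≤ ‖P - Q‖ * ‖u‖ + ‖Q‖ * ‖u - v‖ :=
        (norm_add_le _ _).trans (add_le_add ((P - Q).le_opNorm u) (Q.le_opNorm _))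

lemma abs_mul_sub_mul_le (p q r s : ℝ) : |p * r - q * s| ≤ |p| * |r - s| + |p - q| * |s| :=
  calc |p * r - q * s| = |p * (r - s) + (p - q) * s| := by congr 1; ring
    _ ≤ |p| * |r - s| + |p - q| * |s| := by
        rw [← abs_mul, ← abs_mul]; exact abs_add_le _ _

lemma IsCompact.eventually_forall_mem_of_injOn {X Y : Type*} [TopologicalSpace X]
    [TopologicalSpace Y] [T2Space Y] {S U : Set X} {f : X → Y} (hS : IsCompact S)
    (hf : ContinuousOn f S) (hinj : InjOn f S) {x₀ : X} (hx₀ : x₀ ∈ S) (hU : U ∈ 𝓝 x₀) :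
    ∀ᶠ y in 𝓝 (f x₀), ∀ x ∈ S, f x = y → x ∈ U := by
  have hfar : IsClosed (f '' (S \ interior U)) :=
    ((hS.diff isOpen_interior).image_of_continuousOn (hf.mono sdiff_subset)).isClosed
  have hx₀far : f x₀ ∉ f '' (S \ interior U) := by
    rintro ⟨x, ⟨hxS, hxU⟩, hfx⟩
    exact hxU (hinj hxS hx₀ hfx ▸ mem_interior_iff_mem_nhds.mpr hU)
  filter_upwards [hfar.isOpen_compl.mem_nhds hx₀far] with y hy x hxS hfx
  by_contra hxU
  exact hy ⟨x, ⟨hxS, fun hx => hxU (interior_subset hx)⟩, hfx⟩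

lemma isClosed_refT : IsClosed refT :=
  (isClosed_le continuous_const (by fun_prop : Continuous fun x : E2 => x 0)).inter
    ((isClosed_le continuous_const (by fun_prop : Continuous fun x : E2 => x 1)).inter
      (isClosed_le (by fun_prop : Continuous fun x : E2 => x 0 + x 1) continuous_const))

lemma measurableSet_refT : MeasurableSet refT := isClosed_refT.measurableSet

lemma convex_refT : Convex ℝ refT := by
  rintro x ⟨hx0, hx1, hx⟩ y ⟨hy0, hy1, hy⟩ a b ha hb hab
  simp only [refT, mem_ofPred_eq, PiLp.add_apply, PiLp.smul_apply, smul_eq_mul]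
  refine ⟨by positivity, by positivity, ?_⟩
  nlinarith

lemma norm_le_one_of_mem_refT {x : E2} (hx : x ∈ refT) : ‖x‖ ≤ 1 := by
  obtain ⟨hx0, hx1, hx⟩ := hx
  rw [EuclideanSpace.norm_eq, Fin.sum_univ_two, Real.sqrt_le_one]
  simp only [Real.norm_eq_abs, sq_abs]
  nlinarith

lemma norm_sub_le_two_of_mem_refT {x y : E2} (hx : x ∈ refT) (hy : y ∈ refT) : ‖x - y‖ ≤ 2 :=
  (norm_sub_le x y).trans (by linarith [norm_le_one_of_mem_refT hx, norm_le_one_of_mem_refT hy])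

lemma isCompact_refT : IsCompact refT :=
  isCompact_of_isClosed_isBounded isClosed_refT
    (isBounded_iff_forall_norm_le.mpr ⟨1, fun _ => norm_le_one_of_mem_refT⟩)

lemma bary_mem_refT : pt (1/3) (1/3) ∈ refT := by
  simp only [refT, pt, mem_ofPred_eq]; norm_num

lemma contDiff_phi : ContDiff ℝ 1 phi := by
  unfold phi; fun_prop

/-- In barycentric coordinates `λ`, `φ = 2 - 3 ∑ λᵢ²` and `1/3 ≤ ∑ λᵢ² ≤ 1` on `T̂`. -/
lemma abs_phi_le_one {x : E2} (hx : x ∈ refT) : |phi x| ≤ 1 := by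
  obtain ⟨hx0, hx1, hx⟩ := hx
  rw [abs_le]; unfold phi
  constructor <;> nlinarith [sq_nonneg (x 0 - x 1), sq_nonneg (1 - 2 * x 0 - x 1),
    sq_nonneg (1 - x 0 - 2 * x 1), mul_nonneg hx0 hx1, mul_nonneg hx0 (sub_nonneg.2 hx),
    mul_nonneg hx1 (sub_nonneg.2 hx)]

lemma exists_lipschitzOnWith_phi : ∃ L, LipschitzOnWith L phi refT :=
  contDiff_phi.contDiffOn.exists_lipschitzOnWith one_ne_zero convex_refT isCompact_refT

lemma integral_phi_sq_pos : 0 < ∫ x in refT, phi x ^ 2 := by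
  have hphi := contDiff_phi.continuous
  rw [setIntegral_pos_iff_support_of_nonneg_ae (Eventually.of_forall fun x => sq_nonneg _)
    ((hphi.pow 2).continuousOn.integrableOn_compact isCompact_refT)]
  set U := {x : E2 | 0 < x 0 ∧ 0 < x 1 ∧ x 0 + x 1 < 1 ∧ phi x ≠ 0}
  have hU : IsOpen U :=
    (isOpen_lt continuous_const (by fun_prop : Continuous fun x : E2 => x 0)).inter
      ((isOpen_lt continuous_const (by fun_prop : Continuous fun x : E2 => x 1)).inter
        ((isOpen_lt (by fun_prop : Continuous fun x : E2 => x 0 + x 1) continuous_const).inter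
          (isOpen_ne_fun hphi continuous_const)))
  have hbary : pt (1/3) (1/3) ∈ U := by
    simp only [U, phi, pt, mem_ofPred_eq]; norm_num
  calc 0 < volume U := hU.measure_pos volume ⟨_, hbary⟩
    _ ≤ volume (Function.support (fun x => phi x ^ 2) ∩ refT) :=
        measure_mono fun x hx => ⟨pow_ne_zero 2 hx.2.2.2, hx.1.le, hx.2.1.le, hx.2.2.1.le⟩

lemma bub_eq_smul (s t : ℝ) (x : E2) : bub s t x = phi x • pt s t := by
  ext i; fin_cases i <;> simp [bub, pt, mul_comm]

lemma norm_bub_le {s t : ℝ} {x : E2} (hx : x ∈ refT) : ‖bub s t x‖ ≤ ‖pt s t‖ := by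
  rw [bub_eq_smul, norm_smul, Real.norm_eq_abs]
  exact mul_le_of_le_one_left (norm_nonneg _) (abs_phi_le_one hx)

lemma norm_bub_sub_le {L : NNReal} (hL : LipschitzOnWith L phi refT) (s t : ℝ) {x y : E2}
    (hx : x ∈ refT) (hy : y ∈ refT) : ‖bub s t x - bub s t y‖ ≤ L * ‖pt s t‖ * ‖x - y‖ := by
  rw [bub_eq_smul, bub_eq_smul, ← sub_smul, norm_smul, mul_right_comm]
  gcongr
  simpa [dist_eq_norm] using hL.dist_le_mul x hx y hy

lemma continuous_bub (s t : ℝ) : Continuous (bub s t) := by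
  rw [show bub s t = fun x => phi x • pt s t from funext (bub_eq_smul s t)]
  exact contDiff_phi.continuous.smul continuous_const

lemma contDiff_mvPolynomial_eval {m : WithTop ℕ∞} (p : MvPolynomial (Fin 2) ℝ) :
    ContDiff ℝ m fun x : E2 => MvPolynomial.eval (fun i => x i) p := by
  induction p using MvPolynomial.induction_on with
  | C a => simpa using contDiff_const
  | add p q hp hq => simpa using hp.add hq
  | mul_X p i hp => simpa using hp.mul (EuclideanSpace.proj i : E2 →L[ℝ] ℝ).contDiff

lemma IsPolyVec.contDiff {n : ℕ} {m : WithTop ℕ∞} {F : E2 → E2} (hF : IsPolyVec n F) :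
    ContDiff ℝ m F := by
  rw [contDiff_euclidean]
  intro i
  obtain ⟨p, -, hp⟩ := hF i
  simpa only [← funext hp] using contDiff_mvPolynomial_eval p

lemma E2.det_eq (T : E2 →L[ℝ] E2) :
    T.det = T (EuclideanSpace.single 0 1) 0 * T (EuclideanSpace.single 1 1) 1 -
      T (EuclideanSpace.single 1 1) 0 * T (EuclideanSpace.single 0 1) 1 := by
  rw [ContinuousLinearMap.det, ← LinearMap.det_toMatrix (EuclideanSpace.basisFun (Fin 2) ℝ).toBasis,
    Matrix.det_fin_two]
  simp [LinearMap.toMatrix_apply]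

lemma E2.abs_apply_single_le (T : E2 →L[ℝ] E2) (i j : Fin 2) :
    |T (EuclideanSpace.single j 1) i| ≤ ‖T‖ :=
  calc |T (EuclideanSpace.single j 1) i| ≤ ‖T (EuclideanSpace.single j 1)‖ := by
        simpa using PiLp.norm_apply_le (T (EuclideanSpace.single j 1)) i
    _ ≤ ‖T‖ := by simpa using T.le_opNorm (EuclideanSpace.single j 1)

lemma E2.abs_det_sub_det_le (T S : E2 →L[ℝ] E2) :
    |T.det - S.det| ≤ 2 * (‖T‖ + ‖S‖) * ‖T - S‖ := by
  have hT := E2.abs_apply_single_le T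
  have hS := E2.abs_apply_single_le S
  have hTS := E2.abs_apply_single_le (T - S)
  simp only [sub_apply, PiLp.sub_apply] at hTS
  rw [E2.det_eq, E2.det_eq]
  calc _ ≤ |T (EuclideanSpace.single 0 1) 0 * T (EuclideanSpace.single 1 1) 1 -
          S (EuclideanSpace.single 0 1) 0 * S (EuclideanSpace.single 1 1) 1| +
        |T (EuclideanSpace.single 1 1) 0 * T (EuclideanSpace.single 0 1) 1 -
          S (EuclideanSpace.single 1 1) 0 * S (EuclideanSpace.single 0 1) 1| := by
        rw [sub_sub_sub_comm]; exact abs_sub _ _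
    _ ≤ (‖T‖ * ‖T - S‖ + ‖T - S‖ * ‖S‖) + (‖T‖ * ‖T - S‖ + ‖T - S‖ * ‖S‖) := by
        gcongr <;> refine (abs_mul_sub_mul_le _ _ _ _).trans ?_ <;> gcongr <;>
          first | exact hT _ _ | exact hS _ _ | exact hTS _ _
    _ = 2 * (‖T‖ + ‖S‖) * ‖T - S‖ := by ring

section Admissible

variable {K h : ℝ} {F : E2 → E2}

namespace IsAdmissible

lemma contDiff (hF : IsAdmissible K h F) {m : WithTop ℕ∞} : ContDiff ℝ m F := hF.1.contDiff

lemma norm_fderiv_le (hF : IsAdmissible K h F) {x : E2} (hx : x ∈ refT) :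
    ‖fderiv ℝ F x‖ ≤ K * h := by
  obtain ⟨e, he, hle, -⟩ := hF.2.2 x hx
  exact he ▸ hle

lemma norm_le_fderiv_apply (hF : IsAdmissible K h F) {x : E2} (hx : x ∈ refT) (v : E2) :
    ‖v‖ ≤ K / h * ‖fderiv ℝ F x v‖ := by
  obtain ⟨e, he, -, hle, -⟩ := hF.2.2 x hx
  calc ‖v‖ = ‖(e.symm : E2 →L[ℝ] E2) (e v)‖ := by simp
    _ ≤ K * h⁻¹ * ‖e v‖ := ((e.symm : E2 →L[ℝ] E2).le_opNorm _).trans (by gcongr)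
    _ = K / h * ‖fderiv ℝ F x v‖ := by rw [← he, div_eq_mul_inv]; rfl

lemma jdet_ge (hF : IsAdmissible K h F) {x : E2} (hx : x ∈ refT) : K⁻¹ * h ^ 2 ≤ jdet F x := by
  obtain ⟨_, -, -, -, -, hge, -⟩ := hF.2.2 x hx
  exact hge

lemma jdet_le (hF : IsAdmissible K h F) {x : E2} (hx : x ∈ refT) : jdet F x ≤ K * h ^ 2 := by
  obtain ⟨_, -, -, -, -, -, hle⟩ := hF.2.2 x hx
  exact hle

lemma jdet_pos (hF : IsAdmissible K h F) (hK : 0 < K) (hh : 0 < h) {x : E2} (hx : x ∈ refT) :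
    0 < jdet F x :=
  (by positivity : 0 < K⁻¹ * h ^ 2).trans_le (hF.jdet_ge hx)

lemma inv_jdet_le (hF : IsAdmissible K h F) (hK : 0 < K) (hh : 0 < h) {x : E2} (hx : x ∈ refT) :
    (jdet F x)⁻¹ ≤ K / h ^ 2 := by
  simpa [div_eq_inv_mul, mul_comm] using inv_anti₀ (by positivity) (hF.jdet_ge hx)

lemma norm_fderiv_sub_le (hF : IsAdmissible K h F) {x y : E2} (hx : x ∈ refT) (hy : y ∈ refT) :
    ‖fderiv ℝ F x - fderiv ℝ F y‖ ≤ K * h ^ 2 * ‖x - y‖ := by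
  have hD2 : Differentiable ℝ (fderiv ℝ F) :=
    (hF.contDiff.fderiv_right (m := 1) le_rfl).differentiable one_ne_zero
  refine convex_refT.norm_image_sub_le_of_norm_fderiv_le (fun z _ => hD2 z) (fun z hz => ?_) hy hx
  obtain ⟨_, -, -, -, hle, -⟩ := hF.2.2 z hz
  exact hle

lemma abs_jdet_sub_le (hF : IsAdmissible K h F) {x y : E2} (hx : x ∈ refT) (hy : y ∈ refT) :
    |jdet F x - jdet F y| ≤ 4 * K ^ 2 * h ^ 3 * ‖x - y‖ :=
  calc |jdet F x - jdet F y| ≤ 2 * (K * h + K * h) * (K * h ^ 2 * ‖x - y‖) :=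
        (E2.abs_det_sub_det_le _ _).trans (by
          gcongr
          · linarith [(norm_nonneg _).trans (hF.norm_fderiv_le hx)]
          exacts [hF.norm_fderiv_le hx, hF.norm_fderiv_le hy, hF.norm_fderiv_sub_le hx hy])
    _ = 4 * K ^ 2 * h ^ 3 * ‖x - y‖ := by ring

lemma norm_le_piola_apply (hF : IsAdmissible K h F) (hK : 0 < K) (hh : 0 < h) {x : E2}
    (hx : x ∈ refT) (v : E2) : ‖v‖ ≤ K ^ 2 * h * ‖piola F x v‖ := by
  have hj := hF.jdet_pos hK hh hx
  have hpiola : ‖fderiv ℝ F x v‖ = jdet F x * ‖piola F x v‖ := by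
    rw [piola, smul_apply, norm_smul, Real.norm_of_nonneg (inv_pos.2 hj).le,
      mul_inv_cancel_left₀ hj.ne']
  calc ‖v‖ ≤ K / h * (jdet F x * ‖piola F x v‖) := hpiola ▸ hF.norm_le_fderiv_apply hx v
    _ ≤ K / h * (K * h ^ 2 * ‖piola F x v‖) := by gcongr; exact hF.jdet_le hx
    _ = K ^ 2 * h * ‖piola F x v‖ := by field_simp

lemma sq_norm_le_jdet_mul_sq_norm_piola (hF : IsAdmissible K h F) (hK : 0 < K) (hh : 0 < h)
    {x : E2} (hx : x ∈ refT) (v : E2) : ‖v‖ ^ 2 ≤ K ^ 5 * (jdet F x * ‖piola F x v‖ ^ 2) := by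
  have hh2 : h ^ 2 ≤ K * jdet F x := by
    have := hF.jdet_ge hx
    rwa [inv_mul_le_iff₀ hK] at this
  calc ‖v‖ ^ 2 ≤ (K ^ 2 * h * ‖piola F x v‖) ^ 2 := by
        gcongr; exact hF.norm_le_piola_apply hK hh hx v
    _ = K ^ 4 * h ^ 2 * ‖piola F x v‖ ^ 2 := by ring
    _ ≤ K ^ 4 * (K * jdet F x) * ‖piola F x v‖ ^ 2 := by gcongr
    _ = K ^ 5 * (jdet F x * ‖piola F x v‖ ^ 2) := by ring

/-- `DF` varies by `O(h²)` and `det DF` by `O(h³)` across `T̂`, so the `O(1/h)` matrix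
`DF / det DF` is Lipschitz with a constant independent of `h`. -/
lemma norm_piola_sub_le (hF : IsAdmissible K h F) (hK : 1 ≤ K) (hh : 0 < h) {x y : E2}
    (hx : x ∈ refT) (hy : y ∈ refT) : ‖piola F x - piola F y‖ ≤ 5 * K ^ 5 * ‖x - y‖ := by
  have hK0 : 0 < K := by linarith
  have hjx := hF.jdet_pos hK0 hh hx
  have hjy := hF.jdet_pos hK0 hh hy
  have hsplit : piola F x - piola F y = (jdet F x)⁻¹ • (fderiv ℝ F x - fderiv ℝ F y) +
      ((jdet F y - jdet F x) * ((jdet F x)⁻¹ * (jdet F y)⁻¹)) • fderiv ℝ F y := by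
    have : (jdet F y - jdet F x) * ((jdet F x)⁻¹ * (jdet F y)⁻¹) =
        (jdet F x)⁻¹ - (jdet F y)⁻¹ := by field_simp
    rw [this, piola, piola]; module
  calc ‖piola F x - piola F y‖
      ≤ K / h ^ 2 * (K * h ^ 2 * ‖x - y‖) +
          4 * K ^ 2 * h ^ 3 * ‖x - y‖ * (K / h ^ 2 * (K / h ^ 2)) * (K * h) := by
        rw [hsplit]
        refine (norm_add_le _ _).trans (add_le_add ?_ ?_) <;> rw [norm_smul, Real.norm_eq_abs]
        · rw [abs_of_pos (inv_pos.2 hjx)]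
          gcongr
          exacts [hF.inv_jdet_le hK0 hh hx, hF.norm_fderiv_sub_le hx hy]
        · rw [abs_mul, abs_of_pos (by positivity : 0 < (jdet F x)⁻¹ * (jdet F y)⁻¹), abs_sub_comm]
          gcongr
          exacts [hF.abs_jdet_sub_le hx hy, hF.inv_jdet_le hK0 hh hx, hF.inv_jdet_le hK0 hh hy,
            hF.norm_fderiv_le hy]
    _ = (K ^ 2 + 4 * K ^ 5) * ‖x - y‖ := by field_simp
    _ ≤ 5 * K ^ 5 * ‖x - y‖ := by
        gcongr
        nlinarith [pow_le_pow_right₀ hK (by norm_num : 2 ≤ 5)]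

lemma differentiable (hF : IsAdmissible K h F) : Differentiable ℝ F :=
  hF.contDiff.differentiable one_ne_zero

lemma continuous_fderiv (hF : IsAdmissible K h F) : Continuous (fderiv ℝ F) :=
  hF.contDiff (m := 1).continuous_fderiv one_ne_zero

lemma continuous_jdet (hF : IsAdmissible K h F) : Continuous (jdet F) :=
  ContinuousLinearMap.continuous_det.comp hF.continuous_fderiv

lemma continuousOn_piola (hF : IsAdmissible K h F) (hK : 0 < K) (hh : 0 < h) :
    ContinuousOn (piola F) refT :=
  (hF.continuous_jdet.continuousOn.inv₀ fun _ hx => (hF.jdet_pos hK hh hx).ne').smul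
    hF.continuous_fderiv.continuousOn

lemma integrableOn_jdet_mul_sq_norm (hF : IsAdmissible K h F) {u : E2 → E2}
    (hu : ContinuousOn u refT) : IntegrableOn (fun x => jdet F x * ‖u x‖ ^ 2) refT :=
  (hF.continuous_jdet.continuousOn.mul (hu.norm.pow 2)).integrableOn_compact isCompact_refT

lemma setIntegral_image_eq (hF : IsAdmissible K h F) (hK : 0 < K) (hh : 0 < h)
    {g f : E2 → ℝ} (hgf : ∀ x ∈ refT, g (F x) = f x) :
    ∫ y in F '' refT, g y = ∫ x in refT, jdet F x * f x := by
  rw [integral_image_eq_integral_abs_det_fderiv_smul volume measurableSet_refT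
    (fun x _ => (hF.differentiable x).hasFDerivAt.hasFDerivWithinAt)
    hF.2.1]
  refine setIntegral_congr_fun measurableSet_refT fun x hx => ?_
  rw [smul_eq_mul, hgf x hx]
  exact congrArg (· * f x) (abs_of_pos (hF.jdet_pos hK hh hx))

lemma measureReal_image_le (hF : IsAdmissible K h F) (hK : 0 < K) (hh : 0 < h) :
    volume.real (F '' refT) ≤ K * h ^ 2 * volume.real refT := by
  have hvol := hF.setIntegral_image_eq hK hh (g := fun _ => 1) (f := fun _ => 1) fun _ _ => rfl
  simp only [setIntegral_const, smul_eq_mul, mul_one] at hvol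
  rw [hvol]
  refine (Real.le_norm_self _).trans
    (norm_setIntegral_le_of_norm_le_const isCompact_refT.measure_lt_top fun x hx => ?_)
  rw [Real.norm_of_nonneg (hF.jdet_pos hK hh hx).le]
  exact hF.jdet_le hx

/-- At this scale `F` stays within `h / (2K)` of its linearization at `y`, half of the lower
bound `‖DF(y) v‖ ≥ (h / K) ‖v‖`. -/
lemma norm_sub_le_mul_norm_sub_of_near (hF : IsAdmissible K h F) (hK : 0 < K) (hh : 0 < h)
    {x y : E2} (hx : x ∈ refT) (hy : y ∈ refT) (hxy : ‖x - y‖ ≤ (2 * K ^ 2 * h)⁻¹) :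
    ‖x - y‖ ≤ 2 * K / h * ‖F x - F y‖ := by
  set r := (2 * K ^ 2 * h)⁻¹
  have hlin : ‖F x - F y - fderiv ℝ F y (x - y)‖ ≤ h / (2 * K) * ‖x - y‖ := by
    refine (convex_refT.inter (convex_closedBall y r)).norm_image_sub_le_of_norm_fderiv_le'
      (fun z _ => hF.differentiable z) (fun z hz => ?_)
      ⟨hy, mem_closedBall_self (by positivity)⟩ ⟨hx, mem_closedBall_iff_norm.2 hxy⟩
    calc ‖fderiv ℝ F z - fderiv ℝ F y‖ ≤ K * h ^ 2 * ‖z - y‖ := hF.norm_fderiv_sub_le hz.1 hy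
      _ ≤ K * h ^ 2 * r := by gcongr; exact mem_closedBall_iff_norm.1 hz.2
      _ = h / (2 * K) := by simp only [r]; field_simp
  have hD : ‖x - y‖ ≤ K / h * (‖F x - F y‖ + h / (2 * K) * ‖x - y‖) := by
    refine (hF.norm_le_fderiv_apply hy (x - y)).trans ?_
    gcongr
    calc ‖fderiv ℝ F y (x - y)‖ ≤ ‖F x - F y‖ + ‖F x - F y - fderiv ℝ F y (x - y)‖ :=
          norm_le_insert _ _
      _ ≤ ‖F x - F y‖ + h / (2 * K) * ‖x - y‖ := by gcongr
  have hhalf : K / h * (‖F x - F y‖ + h / (2 * K) * ‖x - y‖) =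
      K / h * ‖F x - F y‖ + ‖x - y‖ / 2 := by
    field_simp
  calc ‖x - y‖ ≤ 2 * (K / h * ‖F x - F y‖) := by linarith
    _ = 2 * K / h * ‖F x - F y‖ := by ring

lemma eventually_exists_preimage (hF : IsAdmissible K h F) (hK : 0 < K) (hh : 0 < h) {x₀ : E2}
    (hx₀ : x₀ ∈ refT) (hint : F x₀ ∈ interior (F '' refT)) :
    ∀ᶠ y in 𝓝 (F x₀), ∃ x ∈ refT, F x = y ∧ ‖x - x₀‖ ≤ 2 * K / h * ‖y - F x₀‖ := by
  filter_upwards [mem_interior_iff_mem_nhds.mp hint,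
    isCompact_refT.eventually_forall_mem_of_injOn hF.differentiable.continuous.continuousOn
      hF.2.1 hx₀
      (closedBall_mem_nhds x₀ (by positivity : (0 : ℝ) < (2 * K ^ 2 * h)⁻¹))]
    with y ⟨x, hx, hxy⟩ hnear
  subst hxy
  exact ⟨x, hx, rfl, hF.norm_sub_le_mul_norm_sub_of_near hK hh hx hx₀
    (mem_closedBall_iff_norm.1 (hnear x hx rfl))⟩

lemma norm_fderiv_le_of_comp_eq (hF : IsAdmissible K h F) (hK : 0 < K) (hh : 0 < h)
    {g G : E2 → E2} {L : ℝ} (hL : 0 ≤ L)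
    (hG : ∀ x ∈ refT, ∀ y ∈ refT, ‖G x - G y‖ ≤ L * ‖x - y‖)
    (hgG : ∀ x ∈ refT, g (F x) = G x) {y : E2} (hy : y ∈ interior (F '' refT)) :
    ‖fderiv ℝ g y‖ ≤ 2 * K / h * L := by
  obtain ⟨x₀, hx₀, rfl⟩ := interior_subset hy
  refine norm_fderiv_le_of_lip' ℝ (mul_nonneg (by positivity) hL) ?_
  filter_upwards [hF.eventually_exists_preimage hK hh hx₀ hy] with _ ⟨x, hx, hxy, hxx₀⟩
  subst hxy
  rw [hgG x hx, hgG x₀ hx₀]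
  calc ‖G x - G x₀‖ ≤ L * ‖x - x₀‖ := hG x hx x₀ hx₀
    _ ≤ L * (2 * K / h * ‖F x - F x₀‖) := by gcongr
    _ = 2 * K / h * L * ‖F x - F x₀‖ := by ring

lemma setIntegral_interior_sq_norm_le {E : Type*} [NormedAddCommGroup E]
    (hF : IsAdmissible K h F) (hK : 0 < K) (hh : 0 < h) {f : E2 → E} {A : ℝ}
    (hf : ∀ y ∈ interior (F '' refT), ‖f y‖ ≤ A / h) :
    ∫ y in interior (F '' refT), ‖f y‖ ^ 2 ≤ A ^ 2 * (K * volume.real refT) := by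
  have hfin : volume (F '' refT) < ⊤ :=
    (isCompact_refT.image hF.differentiable.continuous).measure_lt_top
  calc ∫ y in interior (F '' refT), ‖f y‖ ^ 2
      ≤ (A / h) ^ 2 * volume.real (interior (F '' refT)) :=
        (Real.le_norm_self _).trans (norm_setIntegral_le_of_norm_le_const
          ((measure_mono interior_subset).trans_lt hfin) fun y hy => by
            rw [Real.norm_of_nonneg (sq_nonneg _)]
            exact pow_le_pow_left₀ (norm_nonneg _) (hf y hy) 2)
    _ ≤ (A / h) ^ 2 * (K * h ^ 2 * volume.real refT) := by
        gcongr
        exact (measureReal_mono interior_subset hfin.ne).trans (hF.measureReal_image_le hK hh)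
    _ = A ^ 2 * (K * volume.real refT) := by field_simp

lemma norm_piola_sub_piola_bary_le (hF : IsAdmissible K h F) (hK : 1 ≤ K) (hh : 0 < h)
    {x : E2} (hx : x ∈ refT) : ‖piola F x - piola F (pt (1/3) (1/3))‖ ≤ 10 * K ^ 5 := by
  have hK0 : 0 < K := by linarith
  calc _ ≤ 5 * K ^ 5 * ‖x - pt (1/3) (1/3)‖ := hF.norm_piola_sub_le hK hh hx bary_mem_refT
    _ ≤ 5 * K ^ 5 * 2 := by gcongr; exact norm_sub_le_two_of_mem_refT hx bary_mem_refT
    _ = 10 * K ^ 5 := by ring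

lemma norm_piola_sub_piola_bary_apply_le (hF : IsAdmissible K h F) (hK : 1 ≤ K) (hh : 0 < h)
    {x : E2} (hx : x ∈ refT) (v : E2) :
    ‖(piola F x - piola F (pt (1/3) (1/3))) v‖ ≤ 10 * K ^ 7 * h * ‖piola F x v‖ := by
  have hK0 : 0 < K := by linarith
  calc _ ≤ ‖piola F x - piola F (pt (1/3) (1/3))‖ * ‖v‖ := ContinuousLinearMap.le_opNorm _ _
    _ ≤ 10 * K ^ 5 * (K ^ 2 * h * ‖piola F x v‖) := by
        gcongr
        exacts [hF.norm_piola_sub_piola_bary_le hK hh hx, hF.norm_le_piola_apply hK0 hh hx v]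
    _ = 10 * K ^ 7 * h * ‖piola F x v‖ := by ring

lemma norm_piola_sub_piola_bary_apply_sub_le (hF : IsAdmissible K h F) (hK : 1 ≤ K)
    (hh : 0 < h) {u : E2 → E2} {M L : ℝ} (hM : ∀ x ∈ refT, ‖u x‖ ≤ M)
    (hL : ∀ x ∈ refT, ∀ y ∈ refT, ‖u x - u y‖ ≤ L * ‖x - y‖) {x y : E2} (hx : x ∈ refT)
    (hy : y ∈ refT) :
    ‖(piola F x - piola F (pt (1/3) (1/3))) (u x) - (piola F y - piola F (pt (1/3) (1/3))) (u y)‖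
      ≤ 5 * K ^ 5 * (M + 2 * L) * ‖x - y‖ := by
  have hK0 : 0 < K := by linarith
  refine (ContinuousLinearMap.norm_apply_sub_apply_le _ _ _ _).trans ?_
  rw [sub_sub_sub_cancel_right]
  calc _ ≤ 5 * K ^ 5 * ‖x - y‖ * M + 10 * K ^ 5 * (L * ‖x - y‖) := by
        gcongr
        exacts [hF.norm_piola_sub_le hK hh hx hy, hM x hx, hF.norm_piola_sub_piola_bary_le hK hh hy,
          hL x hx y hy]
    _ = 5 * K ^ 5 * (M + 2 * L) * ‖x - y‖ := by ring

lemma sq_norm_mul_integral_phi_sq_le (hF : IsAdmissible K h F) (hK : 0 < K) (hh : 0 < h)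
    {s t : ℝ} {phiT : E2 → E2} (hT : ∀ x ∈ refT, phiT (F x) = piola F x (bub s t x)) :
    ‖pt s t‖ ^ 2 * ∫ x in refT, phi x ^ 2 ≤ K ^ 5 * ∫ y in F '' refT, ‖phiT y‖ ^ 2 := by
  rw [hF.setIntegral_image_eq hK hh (f := fun x => ‖piola F x (bub s t x)‖ ^ 2)
    (fun x hx => by rw [hT x hx]), ← integral_const_mul, ← integral_const_mul]
  refine setIntegral_mono_on
    (((contDiff_phi.continuous.pow 2).continuousOn.integrableOn_compact isCompact_refT).const_mul _)
    ((hF.integrableOn_jdet_mul_sq_norm ((hF.continuousOn_piola hK hh).clm_apply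
      (continuous_bub s t).continuousOn)).const_mul _) measurableSet_refT fun x hx => ?_
  calc ‖pt s t‖ ^ 2 * phi x ^ 2 = ‖bub s t x‖ ^ 2 := by
        rw [bub_eq_smul, norm_smul, Real.norm_eq_abs, mul_pow, sq_abs, mul_comm]
    _ ≤ K ^ 5 * (jdet F x * ‖piola F x (bub s t x)‖ ^ 2) :=
        hF.sq_norm_le_jdet_mul_sq_norm_piola hK hh hx _

theorem sqrt_integral_sq_norm_sub_le (hF : IsAdmissible K h F) (hK : 1 ≤ K) (hh : 0 < h) {s t : ℝ}
    {phiT phiT' : E2 → E2} (hT : ∀ x ∈ refT, phiT (F x) = piola F x (bub s t x))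
    (hT' : ∀ x ∈ refT, phiT' (F x) = piola F (pt (1/3) (1/3)) (bub s t x)) :
    √(∫ y in F '' refT, ‖phiT y - phiT' y‖ ^ 2) ≤
      10 * K ^ 7 * h * √(∫ y in F '' refT, ‖phiT y‖ ^ 2) := by
  have hK0 : 0 < K := by linarith
  have hA := hF.continuousOn_piola hK0 hh
  have hbub : ContinuousOn (bub s t) refT := (continuous_bub s t).continuousOn
  rw [hF.setIntegral_image_eq hK0 hh
      (f := fun x => ‖(piola F x - piola F (pt (1/3) (1/3))) (bub s t x)‖ ^ 2)
      (fun x hx => by rw [hT x hx, hT' x hx, sub_apply]),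
    hF.setIntegral_image_eq hK0 hh (f := fun x => ‖piola F x (bub s t x)‖ ^ 2)
      (fun x hx => by rw [hT x hx])]
  refine Real.sqrt_le_mul_sqrt (by positivity) ?_
  rw [← integral_const_mul]
  refine setIntegral_mono_on
    (hF.integrableOn_jdet_mul_sq_norm ((hA.sub continuousOn_const).clm_apply hbub))
    ((hF.integrableOn_jdet_mul_sq_norm (hA.clm_apply hbub)).const_mul _) measurableSet_refT
    fun x hx => ?_
  have hj := (hF.jdet_pos hK0 hh hx).le
  calc jdet F x * ‖(piola F x - piola F (pt (1/3) (1/3))) (bub s t x)‖ ^ 2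
      ≤ jdet F x * (10 * K ^ 7 * h * ‖piola F x (bub s t x)‖) ^ 2 := by
        gcongr; exact hF.norm_piola_sub_piola_bary_apply_le hK hh hx _
    _ = (10 * K ^ 7 * h) ^ 2 * (jdet F x * ‖piola F x (bub s t x)‖ ^ 2) := by ring

theorem sqrt_integral_sq_norm_fderiv_sub_le (hF : IsAdmissible K h F) (hK : 1 ≤ K) (hh : 0 < h)
    {L : NNReal} (hL : LipschitzOnWith L phi refT) {s t : ℝ} {phiT phiT' : E2 → E2}
    (hT : ∀ x ∈ refT, phiT (F x) = piola F x (bub s t x))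
    (hT' : ∀ x ∈ refT, phiT' (F x) = piola F (pt (1/3) (1/3)) (bub s t x)) :
    √(∫ y in interior (F '' refT), ‖fderiv ℝ (fun z => phiT z - phiT' z) y‖ ^ 2) ≤
      2 * K * (5 * K ^ 5 * (1 + 2 * L)) *
        √(K ^ 6 * volume.real refT / ∫ x in refT, phi x ^ 2) *
        √(∫ y in F '' refT, ‖phiT y‖ ^ 2) := by
  have hK0 : 0 < K := by linarith
  set c := 5 * K ^ 5 * (1 + 2 * L)
  set c0 := ∫ x in refT, phi x ^ 2
  have hc0 : 0 < c0 := integral_phi_sq_pos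
  have hGlip : ∀ x ∈ refT, ∀ y ∈ refT,
      ‖(piola F x - piola F (pt (1/3) (1/3))) (bub s t x) -
        (piola F y - piola F (pt (1/3) (1/3))) (bub s t y)‖ ≤ c * ‖pt s t‖ * ‖x - y‖ :=
    fun x hx y hy => (hF.norm_piola_sub_piola_bary_apply_sub_le hK hh (fun x hx => norm_bub_le hx)
      (fun x hx y hy => norm_bub_sub_le hL s t hx hy) hx hy).trans_eq (by ring)
  have hderiv : ∀ y ∈ interior (F '' refT),
      ‖fderiv ℝ (fun z => phiT z - phiT' z) y‖ ≤ 2 * K * c * ‖pt s t‖ / h := fun y hy =>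
    (hF.norm_fderiv_le_of_comp_eq hK0 hh (by positivity) hGlip
      (fun x hx => by simp only [hT x hx, hT' x hx, sub_apply]) hy).trans_eq (by ring)
  have hlow : ‖pt s t‖ ^ 2 ≤ K ^ 5 * (∫ y in F '' refT, ‖phiT y‖ ^ 2) / c0 := by
    rw [le_div_iff₀ hc0]; exact hF.sq_norm_mul_integral_phi_sq_le hK0 hh hT
  refine Real.sqrt_le_mul_sqrt (by positivity)
    ((hF.setIntegral_interior_sq_norm_le hK0 hh hderiv).trans ?_)
  calc (2 * K * c * ‖pt s t‖) ^ 2 * (K * volume.real refT)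
      = (2 * K * c) ^ 2 * (K * volume.real refT) * ‖pt s t‖ ^ 2 := by ring
    _ ≤ (2 * K * c) ^ 2 * (K * volume.real refT) *
          (K ^ 5 * (∫ y in F '' refT, ‖phiT y‖ ^ 2) / c0) := by gcongr
    _ = (2 * K * c * √(K ^ 6 * volume.real refT / c0)) ^ 2 * ∫ y in F '' refT, ‖phiT y‖ ^ 2 := by
        rw [mul_pow (2 * K * c), Real.sq_sqrt (by positivity)]
        ring

end IsAdmissible

end Admissible

/-- comparing the Piola-mapped bubble field with the one obtained
by freezing the Piola matrix at the barycenter of the reference triangle. -/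
theorem stmt11 :
    ∀ K : ℝ, 1 ≤ K → ∃ C > (0 : ℝ),
      ∀ h : ℝ, 0 < h → h ≤ 1 → ∀ F : E2 → E2, IsAdmissible K h F → ∀ s t : ℝ,
      ∀ phiT phiT' : E2 → E2,
        (∀ x ∈ refT, phiT (F x) = piola F x (bub s t x)) →
        (∀ x ∈ refT, phiT' (F x) = piola F (pt (1/3) (1/3)) (bub s t x)) →
        (Real.sqrt (∫ y in F '' refT, ‖phiT y - phiT' y‖ ^ 2) ≤
          C * h * Real.sqrt (∫ y in F '' refT, ‖phiT y‖ ^ 2)) ∧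
        (Real.sqrt (∫ y in interior (F '' refT),
            ‖fderiv ℝ (fun z => phiT z - phiT' z) y‖ ^ 2) ≤
          C * Real.sqrt (∫ y in F '' refT, ‖phiT y‖ ^ 2)) := by
  intro K hK
  have hK0 : 0 < K := by linarith
  obtain ⟨L, hL⟩ := exists_lipschitzOnWith_phi
  refine ⟨10 * K ^ 7 + 2 * K * (5 * K ^ 5 * (1 + 2 * L)) *
      √(K ^ 6 * volume.real refT / ∫ x in refT, phi x ^ 2), by positivity,
    fun h hh _ F hF s t phiT phiT' hT hT' => ⟨?_, ?_⟩⟩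
  · refine (hF.sqrt_integral_sq_norm_sub_le hK hh hT hT').trans ?_
    gcongr
    exact le_add_of_nonneg_right (by positivity)
  · refine (hF.sqrt_integral_sq_norm_fderiv_sub_le hK hh hL hT hT').trans ?_
    gcongr
    exact le_add_of_nonneg_left (by positivity)
end
end
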